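/- Fix n ≥ 2. Let A be the n×n real matrix with entries a_{i,i+1} = n−i for 1 ≤ i ≤ n−1, a_{i,i} = n for 2 ≤ i ≤ n, a_{i,j} = 2 whenever i − j is an even positive integer, and all other entries zero. Then the characteristic polynomial of A is (X − 2(n−1))·(X − (n−2))^{n−1}; in particular, the matrix (1/(2(n−1)))·A is nonnegative, has (1,1) entry zero, spectral radius 1, exactly two distinct eigenvalues, and spread equal to n/(2(n−1)). -/

import Mathlib

open Matrix Polynomial

/-- The eigenvalues of a real square matrix: the multiset of roots (with multiplicity)
of its characteristic polynomial over `ℂ`. -/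
noncomputable def eigs {n : ℕ} (A : Matrix (Fin n) (Fin n) ℝ) : Multiset ℂ :=
  ((A.map Complex.ofReal).charpoly).roots

/-- The spectral radius: the maximum of `|λ|` over the eigenvalues `λ`. -/
noncomputable def specRad {n : ℕ} (A : Matrix (Fin n) (Fin n) ℝ) : ℝ :=
  sSup {r : ℝ | ∃ μ ∈ eigs A, r = ‖μ‖}

/-- The spread: the maximum of `|λ - μ|` over pairs of eigenvalues `λ, μ`. -/
noncomputable def spread {n : ℕ} (A : Matrix (Fin n) (Fin n) ℝ) : ℝ :=
  sSup {r : ℝ | ∃ μ ∈ eigs A, ∃ ν ∈ eigs A, r = ‖μ - ν‖}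

/-!
Let `P` be the unit lower triangular matrix whose entries below the diagonal are all `2`. Then
`A P = P T` for the upper bidiagonal `T` with diagonal `(2(n-1), n-2, …, n-2)` and superdiagonal
entries `T (k-1) k = n - k`, so `A` and `T` have the same characteristic polynomial. The only
non-local contribution to `A P` comes from the `2`s of `A` at even distance below the diagonal;
along a column of `P` these sum to `∑_{j < i, i - j even} P j k = i - k - 1` for `k < i`, since
the sum grows by `P i k` when `i` increases by two.

After scaling by `1 / (2(n-1))` the eigenvalues are `1` and `β = (n-2)/(2(n-1))`, with
`0 ≤ β < 1` and `1 - β = n/(2(n-1))`.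
-/

open Finset

theorem Matrix.charpoly_eq_of_mul_eq_mul {ι R : Type*} [Fintype ι] [DecidableEq ι] [CommRing R]
    {A P T : Matrix ι ι R} (h : A * P = P * T) (hP : IsUnit P) : A.charpoly = T.charpoly := by
  obtain ⟨U, rfl⟩ := hP
  have hA : A = U * (T * U⁻¹.val) := by rw [← mul_assoc, ← h, mul_assoc, U.mul_inv, mul_one]
  rw [hA, charpoly_mul_comm, mul_assoc, U.inv_mul, mul_one]

theorem Matrix.isUnit_of_isLowerTriangular_of_diag_eq_one {ι R : Type*} [Fintype ι] [LinearOrder ι]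
    [CommRing R] {P : Matrix ι ι R} (hP : P.IsLowerTriangular) (hdiag : ∀ i, P i i = 1) :
    IsUnit P := by
  rw [isUnit_iff_isUnit_det, det_of_isLowerTriangular P hP]
  simp [hdiag]

theorem eigs_toFinset_eq_pair_of_charpoly_eq {n m : ℕ} {A : Matrix (Fin n) (Fin n) ℝ}
    {a b : ℝ} (h : A.charpoly = (X - C a) * (X - C b) ^ m) (hm : m ≠ 0) :
    (eigs A).toFinset = {(a : ℂ), (b : ℂ)} := by
  have hC : (A.map Complex.ofReal).charpoly = (X - C (a : ℂ)) * (X - C (b : ℂ)) ^ m := by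
    have := A.charpoly_map Complex.ofRealHom
    simp only [h, Polynomial.map_mul, Polynomial.map_pow, Polynomial.map_sub, map_X, map_C] at this
    exact this
  ext μ
  have hne : (X - C (a : ℂ)) * (X - C (b : ℂ)) ^ m ≠ 0 :=
    mul_ne_zero (X_sub_C_ne_zero _) (pow_ne_zero _ (X_sub_C_ne_zero _))
  simp [eigs, hC, roots_mul hne, hm]

theorem specRad_eq_of_eigs_toFinset_eq_pair {n : ℕ} {A : Matrix (Fin n) (Fin n) ℝ} {a b : ℂ}
    (h : (eigs A).toFinset = {a, b}) : specRad A = max ‖a‖ ‖b‖ := by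
  have hmem : ∀ μ, μ ∈ eigs A ↔ μ = a ∨ μ = b := by
    simp [← Multiset.mem_toFinset, h]
  have : {r : ℝ | ∃ μ ∈ eigs A, r = ‖μ‖} = {‖a‖, ‖b‖} := by
    ext r; simp [hmem, eq_comm]
  rw [specRad, this, csSup_pair]

theorem spread_eq_of_eigs_toFinset_eq_pair {n : ℕ} {A : Matrix (Fin n) (Fin n) ℝ} {a b : ℂ}
    (h : (eigs A).toFinset = {a, b}) : spread A = ‖a - b‖ := by
  have hmem : ∀ μ, μ ∈ eigs A ↔ μ = a ∨ μ = b := by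
    simp [← Multiset.mem_toFinset, h]
  have : {r : ℝ | ∃ μ ∈ eigs A, ∃ ν ∈ eigs A, r = ‖μ - ν‖} = {0, ‖a - b‖} := by
    ext r; simp [hmem, eq_comm, norm_sub_rev b a, or_comm]
  rw [spread, this, csSup_pair, sup_of_le_right (norm_nonneg _)]

namespace Extremal

open Matrix

def entry (n i j : ℕ) : ℝ :=
  if j = i + 1 then (n : ℝ) - (i + 1)
  else if i = j ∧ 1 ≤ i then (n : ℝ)
  else if j < i ∧ Even (i - j) then 2
  else 0

theorem entry_nonneg {n i : ℕ} (hi : i < n) (j : ℕ) : 0 ≤ entry n i j := by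
  have : (i : ℝ) + 1 ≤ n := by exact_mod_cast hi
  unfold entry; split_ifs <;> linarith

def unitLowerTwo (i k : ℕ) : ℝ := if k < i then 2 else if i = k then 1 else 0

def bidiag (n j k : ℕ) : ℝ :=
  (if j = k then (if k = 0 then 2 * ((n : ℝ) - 1) else (n : ℝ) - 2) else 0) +
  (if k = j + 1 then (n : ℝ) - k else 0)

theorem sum_range_unitLowerTwo_of_even (k i : ℕ) :
    ∑ j ∈ range i, (if Even (i - j) then unitLowerTwo j k else 0) =
      if k < i then (i : ℝ) - k - 1 else 0 := by
  induction i using Nat.twoStepInduction with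
  | zero => simp
  | one => simp [unitLowerTwo]
  | more i ih _ =>
    have hpar : ∀ j ∈ range i, Even (i + 2 - j) ↔ Even (i - j) := fun j hj => by
      rw [show i + 2 - j = i - j + 2 by grind, Nat.even_add, iff_true_right even_two]
    rw [sum_range_succ, sum_range_succ, sum_congr rfl fun j hj => if_congr (hpar j hj) rfl rfl, ih]
    simp only [unitLowerTwo, show i + 2 - i = 2 by omega, show i + 2 - (i + 1) = 1 by omega,
      even_two, Nat.not_even_one, if_true, if_false, add_zero]
    rcases lt_trichotomy k i with hki | rfl | hik
    · rw [if_pos hki, if_pos hki, if_pos (by omega)]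
      push_cast; ring
    · rw [if_neg (lt_irrefl _), if_neg (lt_irrefl _), if_pos rfl, if_pos (by omega)]
      push_cast; ring
    · rw [if_neg hik.not_gt, if_neg hik.not_gt, if_neg hik.ne, add_zero]
      split_ifs with h
      · obtain rfl : k = i + 1 := by omega
        push_cast; ring
      · rfl

theorem sum_range_entry_mul_unitLowerTwo {n i : ℕ} (hi : i < n) (k : ℕ) :
    ∑ j ∈ range n, entry n i j * unitLowerTwo j k =
      ((n : ℝ) - (i + 1)) * unitLowerTwo (i + 1) k +
        (if 1 ≤ i then (n : ℝ) * unitLowerTwo i k else 0) +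
        2 * (if k < i then (i : ℝ) - k - 1 else 0) := by
  have hsplit : ∀ j, entry n i j * unitLowerTwo j k =
      (if j = i + 1 then ((n : ℝ) - (i + 1)) * unitLowerTwo j k else 0) +
      (if j = i then (if 1 ≤ i then (n : ℝ) * unitLowerTwo j k else 0) else 0) +
      2 * (if j < i then (if Even (i - j) then unitLowerTwo j k else 0) else 0) := fun j => by
    unfold entry; split_ifs <;> first | omega | ring1 | tauto
  have hfilter : (range n).filter (· < i) = range i := by
    ext j; simp only [mem_filter, mem_range]; omega
  rw [sum_congr rfl fun j _ => hsplit j, sum_add_distrib, sum_add_distrib, ← mul_sum, sum_ite_eq',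
    sum_ite_eq', ← sum_filter, hfilter, sum_range_unitLowerTwo_of_even, if_pos (mem_range.2 hi)]
  by_cases h : i + 1 < n
  · rw [if_pos (mem_range.2 h)]
  -- On the last row the superdiagonal term is absent, but its coefficient `n - (i + 1)` is `0`.
  · obtain rfl : n = i + 1 := by omega
    rw [if_neg (by simp)]
    push_cast; ring

theorem sum_range_entry_mul_unitLowerTwo_eq {n i k : ℕ} (hi : i < n) (hk : k < n) :
    ∑ j ∈ range n, entry n i j * unitLowerTwo j k =
      ∑ j ∈ range n, unitLowerTwo i j * bidiag n j k := by
  rw [sum_range_entry_mul_unitLowerTwo hi]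
  rcases k with _ | k
  · simp only [bidiag, mul_ite, mul_zero, sum_ite_eq', mem_range, hk, if_true, Nat.right_eq_add,
      Nat.add_eq_zero_iff, one_ne_zero, and_false, if_false, add_zero, unitLowerTwo]
    split_ifs <;> (try subst_vars) <;> push_cast <;> first | (exfalso; omega) | ring1
  · simp only [bidiag, mul_add, mul_ite, mul_zero, sum_add_distrib, sum_ite_eq', sum_ite_eq,
      mem_range, hk, (by omega : k < n), if_true, Nat.add_eq_zero_iff,
      one_ne_zero, and_false, if_false, unitLowerTwo, add_lt_add_iff_right, add_left_inj]
    split_ifs <;> (try subst_vars) <;> push_cast <;> first | (exfalso; omega) | ring1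

def matrix (n : ℕ) : Matrix (Fin n) (Fin n) ℝ := of fun i j => entry n i j

def unitLowerTwoMatrix (n : ℕ) : Matrix (Fin n) (Fin n) ℝ := of fun i k => unitLowerTwo i k

def bidiagMatrix (n : ℕ) : Matrix (Fin n) (Fin n) ℝ := of fun j k => bidiag n j k

theorem matrix_mul_unitLowerTwoMatrix (n : ℕ) :
    matrix n * unitLowerTwoMatrix n = unitLowerTwoMatrix n * bidiagMatrix n := by
  ext i k
  simp only [matrix, unitLowerTwoMatrix, bidiagMatrix, mul_apply, of_apply]
  rw [Fin.sum_univ_eq_sum_range (fun j => entry n i j * unitLowerTwo j k),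
    Fin.sum_univ_eq_sum_range (fun j => unitLowerTwo i j * bidiag n j k)]
  exact sum_range_entry_mul_unitLowerTwo_eq i.isLt k.isLt

theorem unitLowerTwoMatrix_isLowerTriangular (n : ℕ) : (unitLowerTwoMatrix n).IsLowerTriangular :=
  fun i k (h : (i : ℕ) < k) => by
    simp only [unitLowerTwoMatrix, unitLowerTwo, of_apply, if_neg h.not_gt, if_neg h.ne]

theorem bidiagMatrix_isUpperTriangular (n : ℕ) : (bidiagMatrix n).IsUpperTriangular :=
  fun j k (h : (k : ℕ) < j) => by
    simp only [bidiagMatrix, bidiag, of_apply, if_neg h.ne', if_neg (by omega : (k : ℕ) ≠ j + 1),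
      add_zero]

theorem charpoly_smul_matrix {n : ℕ} (hn : n ≠ 0) (c : ℝ) :
    (c • matrix n).charpoly =
      (X - C (c * (2 * ((n : ℝ) - 1)))) * (X - C (c * ((n : ℝ) - 2))) ^ (n - 1) := by
  have hsim :
      c • matrix n * unitLowerTwoMatrix n = unitLowerTwoMatrix n * (c • bidiagMatrix n) := by
    rw [smul_mul_assoc, matrix_mul_unitLowerTwoMatrix, mul_smul_comm]
  have hunit : IsUnit (unitLowerTwoMatrix n) :=
    isUnit_of_isLowerTriangular_of_diag_eq_one (unitLowerTwoMatrix_isLowerTriangular n)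
      fun i => by simp [unitLowerTwoMatrix, unitLowerTwo]
  rw [charpoly_eq_of_mul_eq_mul hsim hunit,
    charpoly_of_isUpperTriangular _ fun j k h => by simp [bidiagMatrix_isUpperTriangular n h]]
  obtain ⟨m, rfl⟩ := Nat.exists_eq_succ_of_ne_zero hn
  simp [Fin.prod_univ_succ, bidiagMatrix, bidiag]

end Extremal

theorem extremal_matrix_charpoly (n : ℕ) (hn : 2 ≤ n)
    (A : Matrix (Fin n) (Fin n) ℝ)
    (hA : A = Matrix.of fun (i j : Fin n) =>
      if (j : ℕ) = (i : ℕ) + 1 then (n : ℝ) - ((i : ℕ) + 1)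
      else if i = j ∧ 1 ≤ (i : ℕ) then (n : ℝ)
      else if (j : ℕ) < (i : ℕ) ∧ Even ((i : ℕ) - (j : ℕ)) then 2
      else 0) :
    A.charpoly = (X - C (2 * ((n : ℝ) - 1))) * (X - C ((n : ℝ) - 2)) ^ (n - 1) ∧
    (∀ i j, 0 ≤ ((1 / (2 * ((n : ℝ) - 1))) • A) i j) ∧
    ((1 / (2 * ((n : ℝ) - 1))) • A) ⟨0, by omega⟩ ⟨0, by omega⟩ = 0 ∧
    specRad ((1 / (2 * ((n : ℝ) - 1))) • A) = 1 ∧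
    (eigs ((1 / (2 * ((n : ℝ) - 1))) • A)).toFinset.card = 2 ∧
    spread ((1 / (2 * ((n : ℝ) - 1))) • A) = (n : ℝ) / (2 * ((n : ℝ) - 1)) := by
  obtain rfl : A = Extremal.matrix n := by
    rw [hA]; ext i j; simp [Extremal.matrix, Extremal.entry, Fin.ext_iff]
  have hn' : (2 : ℝ) ≤ n := by exact_mod_cast hn
  set c : ℝ := 1 / (2 * ((n : ℝ) - 1)) with hc_def
  have hc : c * (2 * ((n : ℝ) - 1)) = 1 := one_div_mul_cancel (by linarith)
  set β : ℝ := c * ((n : ℝ) - 2) with hβ_def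
  have hβ : 0 ≤ β := mul_nonneg (one_div_pos.2 (by linarith)).le (by linarith)
  have hgap : 1 - β = (n : ℝ) / (2 * ((n : ℝ) - 1)) := by
    rw [← one_div_mul_eq_div, ← hc_def, hβ_def]
    linear_combination -hc
  have hgap_pos : 0 < 1 - β := by rw [hgap]; exact div_pos (by linarith) (by linarith)
  have heigs : (eigs (c • Extremal.matrix n)).toFinset = {((1 : ℝ) : ℂ), (β : ℂ)} :=
    eigs_toFinset_eq_pair_of_charpoly_eq
      (by rw [Extremal.charpoly_smul_matrix (by omega), hc]) (by omega)
  refine ⟨by simpa using Extremal.charpoly_smul_matrix (n := n) (by omega) 1,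
    fun i j => ?_, ?_, ?_, ?_, ?_⟩
  · exact mul_nonneg (one_div_pos.2 (by linarith)).le (Extremal.entry_nonneg i.isLt j)
  · simp [Extremal.matrix, Extremal.entry]
  · rw [specRad_eq_of_eigs_toFinset_eq_pair heigs, Complex.norm_real, Complex.norm_real, norm_one,
      Real.norm_of_nonneg hβ]
    exact max_eq_left (by linarith)
  · rw [heigs, card_pair]
    exact_mod_cast (by linarith : (1 : ℝ) ≠ β)
  · rw [spread_eq_of_eigs_toFinset_eq_pair heigs, ← Complex.ofReal_sub, Complex.norm_real,
      Real.norm_of_nonneg hgap_pos.le, hgap]
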